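/- arXiv:2605.01044 — 2 statements merged into one kernel-verified Lean document; each statement's English description precedes it below -/
import Mathlib

section
/- Let N be a stack-free arboreal network on a finite set X with |X| ≥ 3, let P be the partition of X into the connected components of the graph with vertex set X and an edge {a,b} whenever some triplet ab|c ∈ R(N) has cherry {a,b}, together with singleton blocks for leaves in no such edge. Define the graph G' with vertex set P and an edge between distinct blocks C and C' whenever either some duet x∥y ∈ D(N) has x ∈ C and y ∈ C', or some triplet ab|c ∈ R(N) has a, b ∈ C and c ∈ C'. Then G' is isomorphic to the component graph G(N) of N, where G(N) has as vertices the blocks of the partition C(N) of X obtained by deleting all degree-2 vertices of U(N) together with their incident edges, and an edge between two blocks precisely when some degree-2 vertex of U(N) is adjacent to both corresponding components. -/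
/-!
Common definitions for formalizing arboreal networks.

A (multi-rooted) network is modelled as a `PreNetwork`: a directed graph (arc
relation) on a vertex type `V` together with an embedding of the label set `X`
onto the leaves.  `IsNetwork` collects the m-network axioms.  Since the
underlying graph `U(N)` of an m-network is connected and the degree-1 vertices
of `U(N)` are exactly the leaves, the suppressed graph `U(N)⁻` is an unrooted
phylogenetic tree on `X` if and only if `U(N)` is acyclic; we use this as the
definition of `IsArboreal`.
-/

namespace ArbNet

variable {X V W : Type}

/-- In-degree of a vertex of a digraph given by its arc relation. -/
noncomputable def inDeg (A : V → V → Prop) (v : V) : ℕ := {u | A u v}.ncard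

/-- Out-degree of a vertex of a digraph given by its arc relation. -/
noncomputable def outDeg (A : V → V → Prop) (v : V) : ℕ := {u | A v u}.ncard

/-- A root: in-degree 0 and out-degree at least 2. -/
def IsRoot (A : V → V → Prop) (v : V) : Prop := inDeg A v = 0 ∧ 2 ≤ outDeg A v

/-- A leaf vertex: in-degree 1 and out-degree 0. -/
def IsLeafVtx (A : V → V → Prop) (v : V) : Prop := inDeg A v = 1 ∧ outDeg A v = 0

/-- A hybrid vertex: out-degree 1 and in-degree at least 2. -/
def IsHybrid (A : V → V → Prop) (v : V) : Prop := outDeg A v = 1 ∧ 2 ≤ inDeg A v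

/-- A tree vertex: in-degree 1 and out-degree at least 2. -/
def IsTreeVtx (A : V → V → Prop) (v : V) : Prop := inDeg A v = 1 ∧ 2 ≤ outDeg A v

/-- `Above A v u`: there is a directed path from `v` down to `u`
(`v` is above `u`, `u` is below `v`). -/
def Above (A : V → V → Prop) : V → V → Prop := Relation.ReflTransGen A

/-- The underlying undirected (simple) graph `U(N)` of a digraph. -/
def underlying (A : V → V → Prop) : SimpleGraph V where
  Adj u v := u ≠ v ∧ (A u v ∨ A v u)
  symm := by
    constructor
    intro u v h
    exact ⟨h.1.symm, h.2.symm⟩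
  loopless := by
    constructor
    intro v h
    exact h.1 rfl

/-- The data of a multi-rooted network on label set `X` with vertex type `V`:
an arc relation together with the labelling of the leaves by `X`. -/
structure PreNetwork (X : Type) (V : Type) where
  Arc : V → V → Prop
  leaf : X → V

/-- The m-network axioms: a finite DAG whose underlying graph is connected,
whose leaves are (labelled by) exactly `X`, every in-degree-0 vertex is a root
of out-degree exactly 2, there is no vertex of in-degree 1 and out-degree 1,
and every interior vertex is a hybrid or a tree vertex. -/
def IsNetwork (N : PreNetwork X V) : Prop :=
  Finite V ∧
  (∀ v, ¬ Relation.TransGen N.Arc v v) ∧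
  (underlying N.Arc).Connected ∧
  Function.Injective N.leaf ∧
  (∀ v, IsLeafVtx N.Arc v ↔ v ∈ Set.range N.leaf) ∧
  (∀ v, (inDeg N.Arc v = 0 ∧ outDeg N.Arc v = 2) ∨ IsLeafVtx N.Arc v ∨
      IsHybrid N.Arc v ∨ IsTreeVtx N.Arc v)

/-- `N` is arboreal iff the suppressed underlying graph `U(N)⁻` is an unrooted
phylogenetic tree on `X`; for a connected `U(N)` whose degree-1 vertices are
exactly the leaves this holds iff `U(N)` is acyclic. -/
def IsArboreal (N : PreNetwork X V) : Prop := (underlying N.Arc).IsAcyclic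

/-- Stack-free: no arc whose tail and head are both hybrids. -/
def StackFree (N : PreNetwork X V) : Prop :=
  ∀ u v, N.Arc u v → ¬(IsHybrid N.Arc u ∧ IsHybrid N.Arc v)

/-- Membership in the class `𝒜(X)` of stack-free arboreal networks on `X`. -/
def InA (N : PreNetwork X V) : Prop := IsNetwork N ∧ IsArboreal N ∧ StackFree N

/-- Banyan: the parents of every hybrid are roots, and every leaf is the child
of a root or of a hybrid. -/
def Banyan (N : PreNetwork X V) : Prop :=
  (∀ h p, IsHybrid N.Arc h → N.Arc p h → IsRoot N.Arc p) ∧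
  (∀ x : X, ∃ p, N.Arc p (N.leaf x) ∧ (IsRoot N.Arc p ∨ IsHybrid N.Arc p))

/-- The set `L(v)` of labels of leaves below a vertex `v`. -/
def leavesBelow (N : PreNetwork X V) (v : V) : Set X :=
  {x | Above N.Arc v (N.leaf x)}

/-- The triplet `xy|z` is induced by `N`: `x, y, z` are pairwise distinct and
there are a root `r` and a common ancestor `v ≤ r` of `x` and `y` with
`z ∈ L(r)` and `z ∉ L(v)` (equivalently, `z` is not below the least common
ancestor of `x` and `y` in the tree below `r`). -/
def TripletRel (N : PreNetwork X V) (x y z : X) : Prop :=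
  x ≠ y ∧ x ≠ z ∧ y ≠ z ∧
  ∃ r v, IsRoot N.Arc r ∧ Above N.Arc r v ∧
    Above N.Arc v (N.leaf x) ∧ Above N.Arc v (N.leaf y) ∧
    Above N.Arc r (N.leaf z) ∧ ¬ Above N.Arc v (N.leaf z)

/-- Degree of a vertex in the underlying undirected graph `U(N)`. -/
noncomputable def udeg (N : PreNetwork X V) (v : V) : ℕ :=
  ((underlying N.Arc).neighborSet v).ncard

/-- The duet `x ∥ y` is induced by `N`: `x ≠ y`, no triplet induced by `N`
contains both `x` and `y` among its leaves, and the path in `U(N)` joining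
`x` and `y` crosses precisely one degree-2 vertex of `U(N)`. -/
def DuetRel (N : PreNetwork X V) (x y : X) : Prop :=
  x ≠ y ∧
  (∀ z, ¬ TripletRel N x y z ∧ ¬ TripletRel N x z y ∧ ¬ TripletRel N y z x) ∧
  ∃ w : (underlying N.Arc).Walk (N.leaf x) (N.leaf y),
    w.IsPath ∧ (w.support.countP fun v => decide (udeg N v = 2)) = 1

/-- The triplet system `ℛ(N)`, a triplet `xy|z` being recorded as the pair
`({x,y}, z)` with `{x,y}` an unordered pair. -/
def tripletSys (N : PreNetwork X V) : Set (Sym2 X × X) :=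
  {t | ∃ x y z, TripletRel N x y z ∧ t = (s(x, y), z)}

/-- The duet system `𝒟(N)`. -/
def duetSys (N : PreNetwork X V) : Set (Sym2 X) :=
  {d | ∃ x y, DuetRel N x y ∧ d = s(x, y)}

/-- The union `𝒟(N) ∪ ℛ(N)`, with duets and triplets kept as different kinds
of objects (left resp. right summand). -/
def dtSys (N : PreNetwork X V) : Set (Sym2 X ⊕ (Sym2 X × X)) :=
  (Sum.inl '' duetSys N) ∪ (Sum.inr '' tripletSys N)

/-- Isomorphism of networks on `X`: a bijection of the vertex sets preserving
arcs that is the identity on `X`. -/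
def Isomorphic (N : PreNetwork X V) (N' : PreNetwork X W) : Prop :=
  ∃ e : V ≃ W, (∀ u v, N.Arc u v ↔ N'.Arc (e u) (e v)) ∧
    ∀ x, e (N.leaf x) = N'.leaf x

/-- Two labels are linked if they form the cherry of a common induced triplet. -/
def cherryConn (N : PreNetwork X V) (a b : X) : Prop :=
  ∃ c, TripletRel N a b c

/-- The block of `a`: its connected component under `cherryConn`. -/
def cblockOf (N : PreNetwork X V) (a : X) : Set X :=
  {b | Relation.EqvGen (cherryConn N) a b}

/-- The partition `P` of `X` into `cherryConn`-components (with singleton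
blocks for leaves lying in no cherry). -/
def cblocks (N : PreNetwork X V) : Set (Set X) :=
  {S | ∃ a, S = cblockOf N a}

/-- The graph `G'` on the blocks of `P`: distinct blocks `C, C'` are adjacent
iff some duet has one leaf in `C` and the other in `C'`, or some triplet
`ab|c` has its cherry in one block and `c` in the other. -/
def scaffoldGraph (N : PreNetwork X V) : SimpleGraph (cblocks N) where
  Adj C C' := C ≠ C' ∧
    ((∃ x y, DuetRel N x y ∧ ((x ∈ C.1 ∧ y ∈ C'.1) ∨ (x ∈ C'.1 ∧ y ∈ C.1))) ∨
     (∃ a b c, TripletRel N a b c ∧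
        ((a ∈ C.1 ∧ b ∈ C.1 ∧ c ∈ C'.1) ∨ (a ∈ C'.1 ∧ b ∈ C'.1 ∧ c ∈ C.1))))
  symm := by
    constructor
    rintro C C' ⟨hne, h⟩
    refine ⟨hne.symm, ?_⟩
    rcases h with ⟨x, y, hd, hc⟩ | ⟨a, b, c, ht, hc⟩
    · exact Or.inl ⟨x, y, hd, hc.symm⟩
    · exact Or.inr ⟨a, b, c, ht, hc.symm⟩
  loopless := by
    constructor
    rintro C ⟨hne, -⟩
    exact hne rfl

/-- Adjacency in `U(N)` after deleting all degree-2 vertices and their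
incident edges. -/
def delAdj (N : PreNetwork X V) (u w : V) : Prop :=
  (underlying N.Arc).Adj u w ∧ udeg N u ≠ 2 ∧ udeg N w ≠ 2

/-- Two labels lie in the same component after deleting degree-2 vertices. -/
def compRel (N : PreNetwork X V) (a b : X) : Prop :=
  Relation.ReflTransGen (delAdj N) (N.leaf a) (N.leaf b)

/-- The block of the partition `C(N)` containing `a`. -/
def compBlockOf (N : PreNetwork X V) (a : X) : Set X := {b | compRel N a b}

/-- The partition `C(N)` of `X` into components after deleting all degree-2
vertices of `U(N)`. -/
def compBlocks (N : PreNetwork X V) : Set (Set X) :=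
  {S | ∃ a, S = compBlockOf N a}

/-- `u` is a vertex of the (deleted-graph) component corresponding to the
block `B ⊆ X`. -/
def reachesComp (N : PreNetwork X V) (B : Set X) (u : V) : Prop :=
  udeg N u ≠ 2 ∧ ∃ a ∈ B, Relation.ReflTransGen (delAdj N) (N.leaf a) u

/-- The component graph `G(N)`: blocks of `C(N)`, two of them adjacent
precisely if some degree-2 vertex of `U(N)` is adjacent to both corresponding
components. -/
def compGraph (N : PreNetwork X V) : SimpleGraph (compBlocks N) where
  Adj B B' := B ≠ B' ∧ ∃ v u u', udeg N v = 2 ∧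
    (underlying N.Arc).Adj v u ∧ (underlying N.Arc).Adj v u' ∧
    reachesComp N B.1 u ∧ reachesComp N B'.1 u'
  symm := by
    constructor
    rintro B B' ⟨hne, v, u, u', hv, hu, hu', hB, hB'⟩
    exact ⟨hne.symm, v, u', u, hv, hu', hu, hB', hB⟩
  loopless := by
    constructor
    rintro B ⟨hne, -⟩
    exact hne rfl

section Aux

variable {X V : Type} {N : PreNetwork X V}

lemma arc_ne (hN : IsNetwork N) {u v : V} (h : N.Arc u v) : u ≠ v := by
  rintro rfl; exact hN.2.1 u (Relation.TransGen.single h)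

lemma no_two_cycle (hN : IsNetwork N) {u v : V} (h : N.Arc u v) (h' : N.Arc v u) : False :=
  hN.2.1 u (Relation.TransGen.head h (Relation.TransGen.single h'))

lemma above_antisymm (hN : IsNetwork N) {u v : V} (h : Above N.Arc u v)
    (h' : Above N.Arc v u) : u = v := by
  rcases Relation.ReflTransGen.cases_head h with rfl | ⟨c, hc, hcb⟩
  · rfl
  · exact absurd (Relation.TransGen.head' hc (hcb.trans h')) (hN.2.1 u)

lemma uAdj_of_arc (hN : IsNetwork N) {u v : V} (h : N.Arc u v) :
    (underlying N.Arc).Adj u v := ⟨arc_ne hN h, Or.inl h⟩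

lemma inDeg_ne_zero (hN : IsNetwork N) {p v : V} (h : N.Arc p v) : inDeg N.Arc v ≠ 0 := by
  have hfin : Finite V := hN.1
  intro h0
  have he : ({u | N.Arc u v} : Set V) = ∅ := (Set.ncard_eq_zero (Set.toFinite _)).mp h0
  have : p ∈ ({u | N.Arc u v} : Set V) := h
  rw [he] at this
  exact this

lemma exists_child_of_outDeg_ne_zero (hN : IsNetwork N) {v : V}
    (h : outDeg N.Arc v ≠ 0) : ∃ c, N.Arc v c := by
  have hfin : Finite V := hN.1
  by_contra hc
  push_neg at hc
  exact h (by
    have : ({u | N.Arc v u} : Set V) = ∅ := by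
      ext u; simp [hc u]
    simp [outDeg, this])

lemma exists_parent_of_inDeg_ne_zero (hN : IsNetwork N) {v : V}
    (h : inDeg N.Arc v ≠ 0) : ∃ p, N.Arc p v := by
  have hfin : Finite V := hN.1
  by_contra hc
  push_neg at hc
  exact h (by
    have : ({u | N.Arc u v} : Set V) = ∅ := by
      ext u; simp [hc u]
    simp [inDeg, this])

lemma udeg_eq (hN : IsNetwork N) (v : V) : udeg N v = inDeg N.Arc v + outDeg N.Arc v := by
  have hfin : Finite V := hN.1
  have hset : (underlying N.Arc).neighborSet v = {u | N.Arc u v} ∪ {u | N.Arc v u} := by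
    ext u
    constructor
    · rintro ⟨hne, h | h⟩
      · exact Or.inr h
      · exact Or.inl h
    · rintro (h | h)
      · exact ⟨(arc_ne hN h).symm, Or.inr h⟩
      · exact ⟨arc_ne hN h, Or.inl h⟩
  have hdisj : Disjoint {u | N.Arc u v} {u | N.Arc v u} := by
    rw [Set.disjoint_left]
    intro u h1 h2
    exact no_two_cycle hN h2 h1
  rw [udeg, hset, Set.ncard_union_eq hdisj (Set.toFinite _) (Set.toFinite _)]
  rfl

lemma udeg_two_iff (hN : IsNetwork N) (v : V) : udeg N v = 2 ↔ inDeg N.Arc v = 0 := by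
  rw [udeg_eq hN v]
  rcases hN.2.2.2.2.2 v with ⟨h0, h2⟩ | ⟨h1, h0⟩ | ⟨h1, h2⟩ | ⟨h1, h2⟩
  · simp [h0, h2]
  · simp [h1, h0]
  · constructor
    · intro h; omega
    · intro h; omega
  · constructor
    · intro h; omega
    · intro h; omega

lemma outDeg_of_inDeg_zero (hN : IsNetwork N) {v : V} (h : inDeg N.Arc v = 0) :
    outDeg N.Arc v = 2 := by
  rcases hN.2.2.2.2.2 v with ⟨h0, h2⟩ | ⟨h1, h0⟩ | ⟨h1, h2⟩ | ⟨h1, h2⟩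
  · exact h2
  · omega
  · omega
  · omega

lemma isRoot_of_inDeg_zero (hN : IsNetwork N) {v : V} (h : inDeg N.Arc v = 0) :
    IsRoot N.Arc v := ⟨h, le_of_eq (outDeg_of_inDeg_zero hN h).symm⟩

lemma isLeafVtx_leaf (hN : IsNetwork N) (x : X) : IsLeafVtx N.Arc (N.leaf x) :=
  (hN.2.2.2.2.1 (N.leaf x)).mpr ⟨x, rfl⟩

lemma above_leaf (hN : IsNetwork N) {x : X} {w : V}
    (h : Above N.Arc (N.leaf x) w) : w = N.leaf x := by
  rcases Relation.ReflTransGen.cases_head h with rfl | ⟨c, hc, -⟩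
  · rfl
  · exfalso
    have hout : outDeg N.Arc (N.leaf x) = 0 := (isLeafVtx_leaf hN x).2
    have : outDeg N.Arc (N.leaf x) ≠ 0 := by
      have hfin : Finite V := hN.1
      intro h0
      have he : ({u | N.Arc (N.leaf x) u} : Set V) = ∅ := (Set.ncard_eq_zero (Set.toFinite _)).mp h0
      have : c ∈ ({u | N.Arc (N.leaf x) u} : Set V) := hc
      rw [he] at this
      exact this
    exact this hout

end Aux
section Tools

variable {X V : Type} {N : PreNetwork X V}

lemma exists_leaf_below (hN : IsNetwork N) (v : V) : ∃ x, Above N.Arc v (N.leaf x) := by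
  have hfin : Finite V := hN.1
  have hwf : WellFounded (fun a b : V => Relation.TransGen N.Arc b a) := by
    haveI : IsTrans V (fun a b : V => Relation.TransGen N.Arc b a) :=
      ⟨fun a b c h h' => h'.trans h⟩
    haveI : IsIrrefl V (fun a b : V => Relation.TransGen N.Arc b a) :=
      ⟨fun a h => hN.2.1 a h⟩
    exact Finite.wellFounded_of_trans_of_irrefl _
  induction v using hwf.induction with
  | _ v ih =>
    by_cases h0 : outDeg N.Arc v = 0
    · rcases hN.2.2.2.2.2 v with ⟨-, h2⟩ | hleaf | ⟨h1, -⟩ | ⟨-, h2⟩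
      · omega
      · obtain ⟨x, hx⟩ := (hN.2.2.2.2.1 v).mp hleaf
        exact ⟨x, hx ▸ Relation.ReflTransGen.refl⟩
      · omega
      · omega
    · obtain ⟨c, hc⟩ := exists_child_of_outDeg_ne_zero hN h0
      obtain ⟨x, hx⟩ := ih c (Relation.TransGen.single hc)
      exact ⟨x, Relation.ReflTransGen.head hc hx⟩

lemma exists_root_above (hN : IsNetwork N) (v : V) :
    ∃ r, inDeg N.Arc r = 0 ∧ Above N.Arc r v := by
  have hfin : Finite V := hN.1
  have hwf : WellFounded (fun a b : V => Relation.TransGen N.Arc a b) := by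
    haveI : IsTrans V (fun a b : V => Relation.TransGen N.Arc a b) :=
      ⟨fun a b c h h' => h.trans h'⟩
    haveI : IsIrrefl V (fun a b : V => Relation.TransGen N.Arc a b) :=
      ⟨fun a h => hN.2.1 a h⟩
    exact Finite.wellFounded_of_trans_of_irrefl _
  induction v using hwf.induction with
  | _ v ih =>
    by_cases h0 : inDeg N.Arc v = 0
    · exact ⟨v, h0, Relation.ReflTransGen.refl⟩
    · obtain ⟨p, hp⟩ := exists_parent_of_inDeg_ne_zero hN h0
      obtain ⟨r, hr0, hr⟩ := ih p (Relation.TransGen.single hp)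
      exact ⟨r, hr0, hr.tail hp⟩

lemma delAdj_symm {N : PreNetwork X V} : Symmetric (delAdj N) := by
  rintro u w ⟨hadj, h1, h2⟩
  exact ⟨hadj.symm, h2, h1⟩

lemma above_del (hN : IsNetwork N) {v w : V} (h0 : inDeg N.Arc v ≠ 0)
    (h : Above N.Arc v w) : Relation.ReflTransGen (delAdj N) v w := by
  induction h using Relation.ReflTransGen.head_induction_on with
  | refl => exact Relation.ReflTransGen.refl
  | head harc hrest ih =>
    rename_i a c
    have hc0 : inDeg N.Arc c ≠ 0 := inDeg_ne_zero hN harc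
    refine Relation.ReflTransGen.head ⟨uAdj_of_arc hN harc, ?_, ?_⟩ (ih hc0)
    · intro h2; exact h0 ((udeg_two_iff hN a).mp h2)
    · intro h2; exact hc0 ((udeg_two_iff hN c).mp h2)

/-- A directed path yields an undirected path all of whose vertices lie
between the endpoints. -/
lemma exists_dirPath (hN : IsNetwork N) {a b : V} (h : Above N.Arc a b) :
    ∃ w : (underlying N.Arc).Walk a b, w.IsPath ∧
      ∀ u ∈ w.support, Above N.Arc a u ∧ Above N.Arc u b := by
  induction h using Relation.ReflTransGen.head_induction_on with
  | refl =>
    refine ⟨SimpleGraph.Walk.nil, SimpleGraph.Walk.IsPath.nil, ?_⟩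
    intro u hu
    simp only [SimpleGraph.Walk.support_nil, List.mem_singleton] at hu
    subst hu
    exact ⟨Relation.ReflTransGen.refl, Relation.ReflTransGen.refl⟩
  | head harc hrest ih =>
    rename_i a c
    obtain ⟨w', hw', hprop⟩ := ih
    refine ⟨SimpleGraph.Walk.cons (uAdj_of_arc hN harc) w', ?_, ?_⟩
    · rw [SimpleGraph.Walk.cons_isPath_iff]
      refine ⟨hw', fun hmem => ?_⟩
      have := (hprop a hmem).1
      exact hN.2.1 a (Relation.TransGen.head' harc this)
    · intro u hu
      rw [SimpleGraph.Walk.support_cons, List.mem_cons] at hu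
      rcases hu with rfl | hu
      · exact ⟨Relation.ReflTransGen.refl, Relation.ReflTransGen.head harc hrest⟩
      · exact ⟨Relation.ReflTransGen.head harc (hprop u hu).1, (hprop u hu).2⟩

lemma path_unique (hArb : IsArboreal N) {a b : V}
    {p q : (underlying N.Arc).Walk a b} (hp : p.IsPath) (hq : q.IsPath) : p = q := by
  have := (SimpleGraph.isAcyclic_iff_path_unique.mp hArb) ⟨p, hp⟩ ⟨q, hq⟩
  exact congrArg Subtype.val this

/-- Two distinct children of a common vertex cannot both be above the same
vertex. -/
lemma no_leaf_below_both (hN : IsNetwork N) (hArb : IsArboreal N)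
    {r a a' l : V} (h : N.Arc r a) (h' : N.Arc r a') (hne : a ≠ a')
    (hl : Above N.Arc a l) (hl' : Above N.Arc a' l) : False := by
  obtain ⟨w1, hw1, hp1⟩ := exists_dirPath hN hl
  obtain ⟨w2, hw2, hp2⟩ := exists_dirPath hN hl'
  have hr1 : r ∉ w1.support := fun hmem =>
    hN.2.1 r (Relation.TransGen.head' h (hp1 r hmem).1)
  have hr2 : r ∉ w2.support := fun hmem =>
    hN.2.1 r (Relation.TransGen.head' h' (hp2 r hmem).1)
  have hq1 : (SimpleGraph.Walk.cons (uAdj_of_arc hN h) w1).IsPath := by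
    rw [SimpleGraph.Walk.cons_isPath_iff]; exact ⟨hw1, hr1⟩
  have hq2 : (SimpleGraph.Walk.cons (uAdj_of_arc hN h') w2).IsPath := by
    rw [SimpleGraph.Walk.cons_isPath_iff]; exact ⟨hw2, hr2⟩
  have heq := path_unique hArb hq1 hq2
  have hsup := congrArg SimpleGraph.Walk.support heq
  rw [SimpleGraph.Walk.support_cons, SimpleGraph.Walk.support_cons] at hsup
  have h1 := SimpleGraph.Walk.support_eq_cons w1
  have h2 := SimpleGraph.Walk.support_eq_cons w2
  rw [h1, h2] at hsup
  simp only [List.cons.injEq, true_and] at hsup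
  exact hne hsup.1

/-- Any vertex between `v` and `x'` (in the directed sense) lies on any
undirected path from `v` to `x'`. -/
lemma mem_path_of_between (hN : IsNetwork N) (hArb : IsArboreal N)
    {v v₀ x' : V} (h1 : Above N.Arc v v₀) (h2 : Above N.Arc v₀ x')
    (w0 : (underlying N.Arc).Walk v x') (hw0 : w0.IsPath) : v₀ ∈ w0.support := by
  obtain ⟨p1, hp1, hq1⟩ := exists_dirPath hN h1
  obtain ⟨p2, hp2, hq2⟩ := exists_dirPath hN h2
  have hpath : (p1.append p2).IsPath := by
    rw [SimpleGraph.Walk.isPath_def, SimpleGraph.Walk.support_append, List.nodup_append]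
    refine ⟨hp1.2, ?_, ?_⟩
    · have := hp2.2
      rw [SimpleGraph.Walk.support_eq_cons p2] at this
      exact this.of_cons
    · intro u hu1 u' hu2 huu'
      subst huu'
      have hu2' : u ∈ p2.support := List.mem_of_mem_tail hu2
      have huv : u = v₀ := above_antisymm hN (hq1 u hu1).2 (hq2 u hu2').1
      subst huv
      have := hp2.2
      rw [SimpleGraph.Walk.support_eq_cons p2] at this
      exact (List.nodup_cons.mp this).1 hu2
  have heq := path_unique hArb hpath hw0
  have : v₀ ∈ (p1.append p2).support := by
    rw [SimpleGraph.Walk.support_append]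
    exact List.mem_append_left _ (SimpleGraph.Walk.end_mem_support p1)
  rwa [heq] at this

/-- If a root `r` is above both endpoints of a path `w0`, then any root `v`
lying on `w0` must be `r` itself. -/
lemma root_on_path_unique (hN : IsNetwork N) (hArb : IsArboreal N)
    {r v x' y' : V} (_hr : inDeg N.Arc r = 0) (hv : inDeg N.Arc v = 0)
    (hx : Above N.Arc r x') (hy : Above N.Arc r y')
    (w0 : (underlying N.Arc).Walk x' y') (hw0 : w0.IsPath)
    (hvw : v ∈ w0.support) : r = v := by
  classical
  by_contra hrv
  obtain ⟨p1, hp1, hq1⟩ := exists_dirPath hN hx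
  obtain ⟨p2, hp2, hq2⟩ := exists_dirPath hN hy
  have hnv1 : v ∉ p1.support := by
    intro hmem
    have habove := (hq1 v hmem).1
    rcases Relation.ReflTransGen.cases_tail habove with h | ⟨c, -, hc⟩
    · exact hrv h.symm
    · exact inDeg_ne_zero hN hc hv
  have hnv2 : v ∉ p2.support := by
    intro hmem
    have habove := (hq2 v hmem).1
    rcases Relation.ReflTransGen.cases_tail habove with h | ⟨c, -, hc⟩
    · exact hrv h.symm
    · exact inDeg_ne_zero hN hc hv
  set q := (p1.reverse.append p2).bypass with hq
  have hqpath : q.IsPath := SimpleGraph.Walk.bypass_isPath _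
  have hqsub : q.support ⊆ (p1.reverse.append p2).support :=
    SimpleGraph.Walk.support_bypass_subset _
  have heq := path_unique hArb hqpath hw0
  have : v ∈ q.support := by rw [heq]; exact hvw
  have := hqsub this
  rw [SimpleGraph.Walk.support_append] at this
  rcases List.mem_append.mp this with h | h
  · rw [SimpleGraph.Walk.support_reverse, List.mem_reverse] at h
    exact hnv1 h
  · exact hnv2 (List.mem_of_mem_tail h)

end Tools
section Blocks

variable {X V : Type} {N : PreNetwork X V}

lemma compRel_refl (N : PreNetwork X V) (a : X) : compRel N a a := Relation.ReflTransGen.refl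

lemma compRel_symm {a b : X} (h : compRel N a b) : compRel N b a :=
  (haveI : Std.Symm (delAdj N) := ⟨fun _ _ h => delAdj_symm h⟩; Std.Symm.symm (r := Relation.ReflTransGen (delAdj N)) _ _ h)

lemma compRel_trans {a b c : X} (h : compRel N a b) (h' : compRel N b c) :
    compRel N a c := Relation.ReflTransGen.trans h h'

lemma cherry_to_comp (hN : IsNetwork N) {a b : X} (h : cherryConn N a b) :
    compRel N a b := by
  obtain ⟨c, -, -, -, r, v, hroot, hrv, hva, hvb, hrz, hnvz⟩ := h
  have hv0 : inDeg N.Arc v ≠ 0 := by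
    intro h0
    rcases Relation.ReflTransGen.cases_tail hrv with heq | ⟨d, -, hd⟩
    · exact hnvz (heq ▸ hrz)
    · exact inDeg_ne_zero hN hd h0
  have h1 := above_del hN hv0 hva
  have h2 := above_del hN hv0 hvb
  exact Relation.ReflTransGen.trans (haveI : Std.Symm (delAdj N) := ⟨fun _ _ h => delAdj_symm h⟩; Std.Symm.symm (r := Relation.ReflTransGen (delAdj N)) _ _ h1) h2

lemma eqvGen_to_comp (hN : IsNetwork N) {a b : X}
    (h : Relation.EqvGen (cherryConn N) a b) : compRel N a b := by
  induction h with
  | rel x y hxy => exact cherry_to_comp hN hxy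
  | refl x => exact compRel_refl N x
  | symm x y _ ih => exact compRel_symm ih
  | trans x y z _ _ ih1 ih2 => exact compRel_trans ih1 ih2

/-- Any two distinct leaves below a common non-root vertex form the cherry of
an induced triplet. -/
lemma cherry_of_common_nonroot (hN : IsNetwork N) (hArb : IsArboreal N)
    {u : V} {x y : X} (hu0 : inDeg N.Arc u ≠ 0)
    (hx : Above N.Arc u (N.leaf x)) (hy : Above N.Arc u (N.leaf y))
    (hxy : x ≠ y) : cherryConn N x y := by
  have hfin : Finite V := hN.1
  obtain ⟨r, hr0, hru⟩ := exists_root_above hN u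
  have hru' : r ≠ u := fun h => hu0 (h ▸ hr0)
  obtain ⟨c1, hc1, hc1u⟩ : ∃ c, N.Arc r c ∧ Above N.Arc c u := by
    rcases Relation.ReflTransGen.cases_head hru with h | ⟨c, hc, hcu⟩
    · exact absurd h hru'
    · exact ⟨c, hc, hcu⟩
  obtain ⟨c2, hc2, hc12⟩ : ∃ c, N.Arc r c ∧ c ≠ c1 := by
    have h2 : 1 < outDeg N.Arc r := by
      rw [outDeg_of_inDeg_zero hN hr0]; omega
    obtain ⟨a, ha, b, hb, hab⟩ := (Set.one_lt_ncard (Set.toFinite _)).mp h2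
    by_cases hac : a = c1
    · exact ⟨b, hb, fun h => hab (h.trans hac.symm ▸ rfl)⟩
    · exact ⟨a, ha, hac⟩
  obtain ⟨z, hz⟩ := exists_leaf_below hN c2
  have hnotu : ∀ w : X, Above N.Arc u (N.leaf w) → ¬ Above N.Arc c2 (N.leaf w) := by
    intro w hw hw2
    exact no_leaf_below_both hN hArb hc1 hc2 (fun h => hc12 h.symm)
      (hc1u.trans hw) hw2
  have hxz : x ≠ z := by
    rintro rfl; exact hnotu x hx hz
  have hyz : y ≠ z := by
    rintro rfl; exact hnotu y hy hz
  refine ⟨z, hxy, hxz, hyz, r, u, isRoot_of_inDeg_zero hN hr0, hru, hx, hy,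
    Relation.ReflTransGen.head hc2 hz, ?_⟩
  exact fun hz' => hnotu z hz' hz

lemma comp_to_eqvGen (hN : IsNetwork N) (hArb : IsArboreal N) {a b : X}
    (h : compRel N a b) : Relation.EqvGen (cherryConn N) a b := by
  suffices H : ∀ v, Relation.ReflTransGen (delAdj N) (N.leaf a) v →
      ∀ x, Above N.Arc v (N.leaf x) → Relation.EqvGen (cherryConn N) a x by
    exact H (N.leaf b) h b Relation.ReflTransGen.refl
  intro v hv
  induction hv with
  | refl =>
    intro x hx
    have := above_leaf hN hx
    have hxa : x = a := hN.2.2.2.1 this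
    subst hxa
    exact Relation.EqvGen.refl x
  | tail hstep hlast ih =>
    rename_i c v'
    intro x hx
    obtain ⟨hadj, hc2, hv2⟩ := hlast
    have hv0 : inDeg N.Arc v' ≠ 0 := fun h0 => hv2 ((udeg_two_iff hN v').mpr h0)
    have hc0 : inDeg N.Arc c ≠ 0 := fun h0 => hc2 ((udeg_two_iff hN c).mpr h0)
    rcases hadj.2 with harc | harc
    · -- Arc c v'
      exact ih x (Relation.ReflTransGen.head harc hx)
    · -- Arc v' c
      obtain ⟨y, hy⟩ := exists_leaf_below hN c
      have hay : Relation.EqvGen (cherryConn N) a y := ih y hy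
      by_cases hxy : y = x
      · exact hxy ▸ hay
      · exact Relation.EqvGen.trans a y x hay
          (Relation.EqvGen.rel y x
            (cherry_of_common_nonroot hN hArb hv0
              (Relation.ReflTransGen.head harc hy) hx hxy))

lemma cblockOf_eq (hN : IsNetwork N) (hArb : IsArboreal N) (a : X) :
    cblockOf N a = compBlockOf N a := by
  ext b
  exact ⟨fun h => eqvGen_to_comp hN h, fun h => comp_to_eqvGen hN hArb h⟩

lemma cblocks_eq (hN : IsNetwork N) (hArb : IsArboreal N) :
    cblocks N = compBlocks N := by
  ext S
  constructor
  · rintro ⟨a, rfl⟩; exact ⟨a, cblockOf_eq hN hArb a⟩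
  · rintro ⟨a, rfl⟩; exact ⟨a, (cblockOf_eq hN hArb a).symm⟩

lemma mem_compBlockOf {a b : X} : b ∈ compBlockOf N a ↔ compRel N a b := Iff.rfl

lemma compBlock_closed {a b c : X} (hb : b ∈ compBlockOf N a)
    (h : compRel N b c) : c ∈ compBlockOf N a := compRel_trans hb h

lemma compBlock_eq_of_common {α β z : X}
    (hz : z ∈ compBlockOf N α) (hz' : z ∈ compBlockOf N β) :
    compBlockOf N α = compBlockOf N β := by
  ext w
  constructor
  · intro hw
    exact compRel_trans hz' (compRel_trans (compRel_symm hz) hw)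
  · intro hw
    exact compRel_trans hz (compRel_trans (compRel_symm hz') hw)

end Blocks
section ScafToComp

variable {X V : Type} {N : PreNetwork X V}

lemma udeg_leaf_ne_two (hN : IsNetwork N) (x : X) : udeg N (N.leaf x) ≠ 2 := by
  intro h2
  have := (udeg_two_iff hN (N.leaf x)).mp h2
  have h1 : inDeg N.Arc (N.leaf x) = 1 := (isLeafVtx_leaf hN x).1
  omega

/-- Climbing a walk all of whose vertices other than the endpoint avoid
degree 2, we reach a neighbor of the endpoint within the deleted graph. -/
lemma climb (hN : IsNetwork N) {s v : V} (w : (underlying N.Arc).Walk s v)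
    (hint : ∀ t ∈ w.support, udeg N t = 2 → t = v) (hsv : s ≠ v) :
    ∃ u, (underlying N.Arc).Adj u v ∧ udeg N u ≠ 2 ∧
      Relation.ReflTransGen (delAdj N) s u := by
  induction w with
  | nil => exact absurd rfl hsv
  | cons h p ih =>
    rename_i s c v'
    have hs2 : udeg N s ≠ 2 := fun h2 =>
      hsv (hint s (SimpleGraph.Walk.start_mem_support _) h2)
    by_cases hcv : c = v'
    · subst hcv
      exact ⟨s, h, hs2, Relation.ReflTransGen.refl⟩
    · have hint' : ∀ t ∈ p.support, udeg N t = 2 → t = v' := fun t ht h2 =>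
        hint t (by rw [SimpleGraph.Walk.support_cons]; exact List.mem_cons_of_mem _ ht) h2
      obtain ⟨u, hadj, hu2, hRT⟩ := ih hint' hcv
      have hc2 : udeg N c ≠ 2 := by
        intro h2
        refine hcv (hint c ?_ h2)
        rw [SimpleGraph.Walk.support_cons]
        exact List.mem_cons_of_mem _ (SimpleGraph.Walk.start_mem_support _)
      exact ⟨u, hadj, hu2, Relation.ReflTransGen.head ⟨h, hs2, hc2⟩ hRT⟩

lemma split_duet (hN : IsNetwork N) {x y : X} (hd : DuetRel N x y) :
    ∃ v u u', udeg N v = 2 ∧ (underlying N.Arc).Adj v u ∧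
      (underlying N.Arc).Adj v u' ∧ udeg N u ≠ 2 ∧ udeg N u' ≠ 2 ∧
      Relation.ReflTransGen (delAdj N) (N.leaf x) u ∧
      Relation.ReflTransGen (delAdj N) (N.leaf y) u' := by
  classical
  obtain ⟨hxy, -, w, hw, hcount⟩ := hd
  rw [List.countP_eq_length_filter] at hcount
  obtain ⟨v, hl⟩ := List.length_eq_one_iff.mp hcount
  have hvfil : v ∈ w.support.filter (fun t => decide (udeg N t = 2)) := by
    rw [hl]; exact List.mem_singleton_self v
  rw [List.mem_filter] at hvfil
  obtain ⟨hvmem, hv2'⟩ := hvfil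
  have hv2 : udeg N v = 2 := of_decide_eq_true hv2'
  have huniq : ∀ t ∈ w.support, udeg N t = 2 → t = v := by
    intro t ht h2
    have : t ∈ w.support.filter (fun t => decide (udeg N t = 2)) :=
      List.mem_filter.mpr ⟨ht, decide_eq_true h2⟩
    rw [hl] at this
    exact List.mem_singleton.mp this
  have hvx : N.leaf x ≠ v := fun h => udeg_leaf_ne_two hN x (h ▸ hv2)
  have hvy : N.leaf y ≠ v := fun h => udeg_leaf_ne_two hN y (h ▸ hv2)
  set w1 := w.takeUntil v hvmem with hw1
  set w2 := (w.dropUntil v hvmem).reverse with hw2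
  obtain ⟨u, hadj, hu2, hRT⟩ := climb hN w1
    (fun t ht h2 => huniq t (SimpleGraph.Walk.support_takeUntil_subset w hvmem ht) h2) hvx
  obtain ⟨u', hadj', hu2', hRT'⟩ := climb hN w2
    (fun t ht h2 => huniq t
      (SimpleGraph.Walk.support_dropUntil_subset w hvmem
        (by rw [hw2, SimpleGraph.Walk.support_reverse, List.mem_reverse] at ht; exact ht)) h2)
    hvy
  exact ⟨v, u, u', hv2, hadj.symm, hadj'.symm, hu2, hu2', hRT, hRT'⟩

lemma triplet_to_comp (hN : IsNetwork N) (hArb : IsArboreal N)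
    {a c : X} {α β : X} (ha : a ∈ compBlockOf N α) (hc : c ∈ compBlockOf N β)
    (hAB : compBlockOf N α ≠ compBlockOf N β)
    {b : X} (ht : TripletRel N a b c) :
    ∃ v u u', udeg N v = 2 ∧ (underlying N.Arc).Adj v u ∧
      (underlying N.Arc).Adj v u' ∧ reachesComp N (compBlockOf N α) u ∧
      reachesComp N (compBlockOf N β) u' := by
  obtain ⟨hab, hac, hbc, r, v, hroot, hrv, hva, hvb, hrz, hnvz⟩ := ht
  have hr0 : inDeg N.Arc r = 0 := hroot.1
  have hrv' : r ≠ v := by rintro rfl; exact hnvz hrz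
  obtain ⟨c1, hc1, hc1v⟩ : ∃ d, N.Arc r d ∧ Above N.Arc d v := by
    rcases Relation.ReflTransGen.cases_head hrv with h | ⟨d, hd, hdv⟩
    · exact absurd h hrv'
    · exact ⟨d, hd, hdv⟩
  have hrc' : r ≠ N.leaf c := by
    intro h
    have h1 : inDeg N.Arc (N.leaf c) = 1 := (isLeafVtx_leaf hN c).1
    rw [h] at hr0; omega
  obtain ⟨d, hd, hdc⟩ : ∃ d, N.Arc r d ∧ Above N.Arc d (N.leaf c) := by
    rcases Relation.ReflTransGen.cases_head hrz with h | ⟨d, hd, hdc⟩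
    · exact absurd h hrc'
    · exact ⟨d, hd, hdc⟩
  have hc10 : inDeg N.Arc c1 ≠ 0 := inDeg_ne_zero hN hc1
  have hd0 : inDeg N.Arc d ≠ 0 := inDeg_ne_zero hN hd
  have hRTa : Relation.ReflTransGen (delAdj N) (N.leaf a) c1 :=
    (haveI : Std.Symm (delAdj N) := ⟨fun _ _ h => delAdj_symm h⟩; Std.Symm.symm (r := Relation.ReflTransGen (delAdj N)) _ _ (above_del hN hc10 (hc1v.trans hva)))
  have hRTc : Relation.ReflTransGen (delAdj N) (N.leaf c) d :=
    (haveI : Std.Symm (delAdj N) := ⟨fun _ _ h => delAdj_symm h⟩; Std.Symm.symm (r := Relation.ReflTransGen (delAdj N)) _ _ (above_del hN hd0 hdc))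
  have hd1 : d ≠ c1 := by
    rintro rfl
    have hcompac : compRel N a c :=
      Relation.ReflTransGen.trans hRTa (above_del hN hd0 hdc)
    have hcA : c ∈ compBlockOf N α := compBlock_closed ha hcompac
    exact hAB (compBlock_eq_of_common hcA hc)
  refine ⟨r, c1, d, (udeg_two_iff hN r).mpr hr0, uAdj_of_arc hN hc1, uAdj_of_arc hN hd, ?_, ?_⟩
  · exact ⟨fun h2 => hc10 ((udeg_two_iff hN c1).mp h2), a, ha, hRTa⟩
  · exact ⟨fun h2 => hd0 ((udeg_two_iff hN d).mp h2), c, hc, hRTc⟩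

end ScafToComp
section CompToScaf

variable {X V : Type} {N : PreNetwork X V}

lemma not_two_out (hN : IsNetwork N) (hArb : IsArboreal N) {u : V}
    (h2 : 2 ≤ outDeg N.Arc u) {x : X}
    (huniq : ∀ z, Above N.Arc u (N.leaf z) → z = x) : False := by
  have hfin : Finite V := hN.1
  have h2' : 1 < outDeg N.Arc u := h2
  rw [outDeg] at h2'
  obtain ⟨d1, hd1, d2, hd2, hne⟩ := (Set.one_lt_ncard (Set.toFinite _)).mp h2'
  obtain ⟨z1, hz1⟩ := exists_leaf_below hN d1
  obtain ⟨z2, hz2⟩ := exists_leaf_below hN d2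
  have e1 : z1 = x := huniq z1 (Relation.ReflTransGen.head hd1 hz1)
  have e2 : z2 = x := huniq z2 (Relation.ReflTransGen.head hd2 hz2)
  subst e1
  exact no_leaf_below_both hN hArb hd1 hd2 hne hz1 (e2 ▸ hz2)

/-- Structure of a root child `u` with a unique leaf below it:
there is an explicit short path from the root `v` down to that leaf. -/
lemma half_lemma (hN : IsNetwork N) (hArb : IsArboreal N) (hSF : StackFree N)
    {v u : V} {x : X} (h0 : inDeg N.Arc v = 0) (harc : N.Arc v u)
    (hx : Above N.Arc u (N.leaf x))
    (huniq : ∀ z, Above N.Arc u (N.leaf z) → z = x) :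
    ∃ h : (underlying N.Arc).Walk v (N.leaf x), h.IsPath ∧
      (∀ w ∈ h.support, w = v ∨ w = u ∨ w = N.leaf x) ∧
      (∀ w ∈ h.support, w ≠ v → Above N.Arc u w) ∧
      (∀ w ∈ h.support, udeg N w = 2 → w = v) := by
  have hfin : Finite V := hN.1
  have hu0 : inDeg N.Arc u ≠ 0 := inDeg_ne_zero hN harc
  have hvleaf : v ≠ N.leaf x := by
    intro h
    have h1 : inDeg N.Arc (N.leaf x) = 1 := (isLeafVtx_leaf hN x).1
    rw [h] at h0; omega
  have hlx2 : udeg N (N.leaf x) ≠ 2 := udeg_leaf_ne_two hN x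
  rcases hN.2.2.2.2.2 u with ⟨hu0', -⟩ | hleaf | ⟨hout1, hin2⟩ | ⟨-, hout2⟩
  · exact absurd hu0' hu0
  · -- u is a leaf, so u = N.leaf x
    obtain ⟨x₀, hx₀⟩ := (hN.2.2.2.2.1 u).mp hleaf
    have hux : u = N.leaf x := by
      rw [← hx₀] at hx ⊢
      have h' := above_leaf hN hx
      have hxx : x = x₀ := hN.2.2.2.1 h'
      rw [hxx]
    subst hux
    refine ⟨SimpleGraph.Walk.cons (uAdj_of_arc hN harc) SimpleGraph.Walk.nil, ?_, ?_, ?_, ?_⟩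
    · rw [SimpleGraph.Walk.cons_isPath_iff]
      refine ⟨SimpleGraph.Walk.IsPath.nil, ?_⟩
      simp only [SimpleGraph.Walk.support_nil, List.mem_singleton]
      exact arc_ne hN harc
    · intro w hw
      simp only [SimpleGraph.Walk.support_cons, SimpleGraph.Walk.support_nil,
        List.mem_cons, List.mem_singleton] at hw
      rcases hw with rfl | rfl | h
      · exact Or.inl rfl
      · exact Or.inr (Or.inl rfl)
      · exact absurd h (by simp)
    · intro w hw hwv
      simp only [SimpleGraph.Walk.support_cons, SimpleGraph.Walk.support_nil,
        List.mem_cons, List.mem_singleton] at hw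
      rcases hw with rfl | rfl | h
      · exact absurd rfl hwv
      · exact Relation.ReflTransGen.refl
      · exact absurd h (by simp)
    · intro w hw h2
      simp only [SimpleGraph.Walk.support_cons, SimpleGraph.Walk.support_nil,
        List.mem_cons, List.mem_singleton] at hw
      rcases hw with rfl | rfl | h
      · rfl
      · exact absurd h2 hlx2
      · exact absurd h (by simp)
  · -- u is a hybrid; its unique child is the leaf x
    obtain ⟨w₀, hw₀⟩ := Set.ncard_eq_one.mp hout1
    have harc2 : N.Arc u w₀ := by
      have : w₀ ∈ ({c | N.Arc u c} : Set V) := by rw [hw₀]; exact rfl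
      exact this
    have hw₀x : w₀ = N.leaf x := by
      have hw₀0 : inDeg N.Arc w₀ ≠ 0 := inDeg_ne_zero hN harc2
      rcases hN.2.2.2.2.2 w₀ with ⟨h0', -⟩ | hleaf' | ⟨hh1, hh2⟩ | ⟨-, ht2⟩
      · exact absurd h0' hw₀0
      · obtain ⟨x₁, hx₁⟩ := (hN.2.2.2.2.1 w₀).mp hleaf'
        have : x₁ = x := huniq x₁ (by
          rw [hx₁]
          exact Relation.ReflTransGen.single harc2)
        rw [← hx₁, this]
      · exact absurd ⟨hh1, hh2⟩ (fun hcontra => hSF u w₀ harc2 ⟨⟨hout1, hin2⟩, hcontra⟩)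
      · exact absurd (not_two_out hN hArb ht2
          (fun z hz => huniq z (Relation.ReflTransGen.head harc2 hz))) id
    subst hw₀x
    have hvu : v ≠ u := arc_ne hN harc
    have hulx : u ≠ N.leaf x := arc_ne hN harc2
    refine ⟨SimpleGraph.Walk.cons (uAdj_of_arc hN harc)
      (SimpleGraph.Walk.cons (uAdj_of_arc hN harc2) SimpleGraph.Walk.nil), ?_, ?_, ?_, ?_⟩
    · rw [SimpleGraph.Walk.cons_isPath_iff, SimpleGraph.Walk.cons_isPath_iff]
      refine ⟨⟨SimpleGraph.Walk.IsPath.nil, ?_⟩, ?_⟩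
      · simp only [SimpleGraph.Walk.support_nil, List.mem_singleton]
        exact hulx
      · simp only [SimpleGraph.Walk.support_cons, SimpleGraph.Walk.support_nil,
          List.mem_cons, List.mem_singleton]
        push_neg
        exact ⟨hvu, hvleaf, by simp⟩
    · intro w hw
      simp only [SimpleGraph.Walk.support_cons, SimpleGraph.Walk.support_nil,
        List.mem_cons, List.mem_singleton] at hw
      rcases hw with rfl | rfl | rfl | h
      · exact Or.inl rfl
      · exact Or.inr (Or.inl rfl)
      · exact Or.inr (Or.inr rfl)
      · exact absurd h (by simp)
    · intro w hw hwv
      simp only [SimpleGraph.Walk.support_cons, SimpleGraph.Walk.support_nil,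
        List.mem_cons, List.mem_singleton] at hw
      rcases hw with rfl | rfl | rfl | h
      · exact absurd rfl hwv
      · exact Relation.ReflTransGen.refl
      · exact Relation.ReflTransGen.single harc2
      · exact absurd h (by simp)
    · intro w hw h2
      simp only [SimpleGraph.Walk.support_cons, SimpleGraph.Walk.support_nil,
        List.mem_cons, List.mem_singleton] at hw
      rcases hw with rfl | rfl | rfl | h
      · rfl
      · exfalso
        have := (udeg_two_iff hN _).mp h2
        omega
      · exact absurd h2 hlx2
      · exact absurd h (by simp)
  · -- u a tree vertex: impossible
    exact absurd (not_two_out hN hArb hout2 huniq) id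

end CompToScaf
section Duet

variable {X V : Type} {N : PreNetwork X V}

lemma duet_of_singles (hN : IsNetwork N) (hArb : IsArboreal N) (hSF : StackFree N)
    {v u u' : V} {x y : X} (h0 : inDeg N.Arc v = 0)
    (harc : N.Arc v u) (harc' : N.Arc v u') (huu' : u ≠ u')
    (hx : Above N.Arc u (N.leaf x)) (huniq : ∀ z, Above N.Arc u (N.leaf z) → z = x)
    (hy : Above N.Arc u' (N.leaf y)) (huniq' : ∀ z, Above N.Arc u' (N.leaf z) → z = y) :
    DuetRel N x y := by
  have hfin : Finite V := hN.1
  have hxy : x ≠ y := by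
    rintro rfl
    exact no_leaf_below_both hN hArb harc harc' huu' hx hy
  obtain ⟨hwx, hwxP, hwxChar, hwxAb, hwxDeg⟩ := half_lemma hN hArb hSF h0 harc hx huniq
  obtain ⟨hwy, hwyP, hwyChar, hwyAb, hwyDeg⟩ := half_lemma hN hArb hSF h0 harc' hy huniq'
  -- vertices in both halves equal v
  have hdisj : ∀ w, w ∈ hwx.support → w ∈ hwy.support → w = v := by
    intro w h1 h2
    by_contra hwv
    obtain ⟨z, hz⟩ := exists_leaf_below hN w
    exact no_leaf_below_both hN hArb harc harc' huu'
      ((hwxAb w h1 hwv).trans hz) ((hwyAb w h2 hwv).trans hz)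
  set full := hwx.reverse.append hwy with hfull
  have hsupfull : full.support = hwx.support.reverse ++ hwy.support.tail := by
    rw [hfull, SimpleGraph.Walk.support_append, SimpleGraph.Walk.support_reverse]
  have hsyv : hwy.support = v :: hwy.support.tail := SimpleGraph.Walk.support_eq_cons hwy
  have hvnt : v ∉ hwy.support.tail := by
    intro hmem
    have := hwyP.2
    rw [hsyv] at this
    exact (List.nodup_cons.mp this).1 hmem
  have hfullP : full.IsPath := by
    rw [SimpleGraph.Walk.isPath_def, hsupfull, List.nodup_append]
    refine ⟨List.nodup_reverse.mpr hwxP.2, ?_, ?_⟩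
    · have := hwyP.2
      rw [hsyv] at this
      exact (List.nodup_cons.mp this).2
    · intro w hw1 w' hw2 hww'
      subst hww'
      rw [List.mem_reverse] at hw1
      have : w = v := hdisj w hw1 (List.mem_of_mem_tail hw2)
      subst this
      exact hvnt hw2
  have hvmem : v ∈ full.support := by
    rw [hsupfull]
    exact List.mem_append_left _ (List.mem_reverse.mpr (SimpleGraph.Walk.start_mem_support _))
  have hcount : (full.support.countP fun t => decide (udeg N t = 2)) = 1 := by
    rw [hsupfull, List.countP_append, List.countP_reverse]
    have hsxv : hwx.support = v :: hwx.support.tail := SimpleGraph.Walk.support_eq_cons hwx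
    have hvnt' : v ∉ hwx.support.tail := by
      intro hmem
      have := hwxP.2
      rw [hsxv] at this
      exact (List.nodup_cons.mp this).1 hmem
    have h1 : (hwx.support.countP fun t => decide (udeg N t = 2)) = 1 := by
      rw [hsxv, List.countP_cons]
      have hzero : (hwx.support.tail.countP fun t => decide (udeg N t = 2)) = 0 := by
        rw [List.countP_eq_zero]
        intro t ht
        simp only [decide_eq_true_eq]
        intro h2
        have : t = v := hwxDeg t (by rw [hsxv]; exact List.mem_cons_of_mem _ ht) h2
        exact hvnt' (this ▸ ht)
      rw [hzero]
      simp [(udeg_two_iff hN v).mpr h0]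
    have h2 : (hwy.support.tail.countP fun t => decide (udeg N t = 2)) = 0 := by
      rw [List.countP_eq_zero]
      intro t ht
      simp only [decide_eq_true_eq]
      intro h2
      have : t = v := hwyDeg t (by rw [hsyv]; exact List.mem_cons_of_mem _ ht) h2
      exact hvnt (this ▸ ht)
    rw [h1, h2]
  -- a root above both leaves is v
  have hrootv : ∀ r, inDeg N.Arc r = 0 → Above N.Arc r (N.leaf x) →
      Above N.Arc r (N.leaf y) → r = v := fun r hr hrx hry =>
    root_on_path_unique hN hArb hr h0 hrx hry full hfullP hvmem
  have hbetx : ∀ v₀, Above N.Arc v v₀ → Above N.Arc v₀ (N.leaf x) →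
      v₀ = v ∨ v₀ = u ∨ v₀ = N.leaf x := fun v₀ h1 h2 =>
    hwxChar v₀ (mem_path_of_between hN hArb h1 h2 hwx hwxP)
  have hbety : ∀ v₀, Above N.Arc v v₀ → Above N.Arc v₀ (N.leaf y) →
      v₀ = v ∨ v₀ = u' ∨ v₀ = N.leaf y := fun v₀ h1 h2 =>
    hwyChar v₀ (mem_path_of_between hN hArb h1 h2 hwy hwyP)
  have hvlx : Above N.Arc v (N.leaf x) := Relation.ReflTransGen.head harc hx
  have hvly : Above N.Arc v (N.leaf y) := Relation.ReflTransGen.head harc' hy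
  refine ⟨hxy, ?_, full, hfullP, hcount⟩
  intro z
  refine ⟨?_, ?_, ?_⟩
  · rintro ⟨hxy', hxz, hyz, r, v₀, hroot, hrv₀, hv₀x, hv₀y, hrz, hnz⟩
    have hrv : r = v := hrootv r hroot.1 (hrv₀.trans hv₀x) (hrv₀.trans hv₀y)
    subst hrv
    rcases hbetx v₀ hrv₀ hv₀x with rfl | rfl | rfl
    · exact hnz hrz
    · exact hxy' (huniq y hv₀y).symm
    · exact hxy' (hN.2.2.2.1 (above_leaf hN hv₀y)).symm
  · rintro ⟨hxz, hxy', hzy, r, v₀, hroot, hrv₀, hv₀x, hv₀z, hry, hny⟩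
    have hrv : r = v := hrootv r hroot.1 (hrv₀.trans hv₀x) hry
    subst hrv
    rcases hbetx v₀ hrv₀ hv₀x with rfl | rfl | rfl
    · exact hny hvly
    · exact hxz (huniq z hv₀z).symm
    · exact hxz (hN.2.2.2.1 (above_leaf hN hv₀z)).symm
  · rintro ⟨hyz, hyx, hzx, r, v₀, hroot, hrv₀, hv₀y, hv₀z, hrx, hnx⟩
    have hrv : r = v := hrootv r hroot.1 hrx (hrv₀.trans hv₀y)
    subst hrv
    rcases hbety v₀ hrv₀ hv₀y with rfl | rfl | rfl
    · exact hnx hvlx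
    · exact hyz (huniq' z hv₀z).symm
    · exact hyz (hN.2.2.2.1 (above_leaf hN hv₀z)).symm

end Duet
section Assemble

variable {X V : Type} {N : PreNetwork X V}

lemma comp_adj_to_scaffold (hN : IsNetwork N) (hArb : IsArboreal N) (hSF : StackFree N)
    {α β : X} (hAB : compBlockOf N α ≠ compBlockOf N β)
    {v u u' : V} (hv2 : udeg N v = 2)
    (hu : (underlying N.Arc).Adj v u) (hu' : (underlying N.Arc).Adj v u')
    (hrA : reachesComp N (compBlockOf N α) u) (hrB : reachesComp N (compBlockOf N β) u') :
    (∃ x y, DuetRel N x y ∧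
      ((x ∈ compBlockOf N α ∧ y ∈ compBlockOf N β) ∨
       (x ∈ compBlockOf N β ∧ y ∈ compBlockOf N α))) ∨
    (∃ a b c, TripletRel N a b c ∧
      ((a ∈ compBlockOf N α ∧ b ∈ compBlockOf N α ∧ c ∈ compBlockOf N β) ∨
       (a ∈ compBlockOf N β ∧ b ∈ compBlockOf N β ∧ c ∈ compBlockOf N α))) := by
  have hfin : Finite V := hN.1
  have h0 : inDeg N.Arc v = 0 := (udeg_two_iff hN v).mp hv2
  have harc : N.Arc v u := by
    rcases hu.2 with h | h
    · exact h
    · exact absurd h0 (inDeg_ne_zero hN h)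
  have harc' : N.Arc v u' := by
    rcases hu'.2 with h | h
    · exact h
    · exact absurd h0 (inDeg_ne_zero hN h)
  obtain ⟨hu2, a, ha, hra⟩ := hrA
  obtain ⟨hu'2, b, hb, hrb⟩ := hrB
  have hu0 : inDeg N.Arc u ≠ 0 := fun h => hu2 ((udeg_two_iff hN u).mpr h)
  have hu'0 : inDeg N.Arc u' ≠ 0 := fun h => hu'2 ((udeg_two_iff hN u').mpr h)
  have huu' : u ≠ u' := by
    rintro rfl
    have hab : compRel N a b :=
      Relation.ReflTransGen.trans hra (haveI : Std.Symm (delAdj N) := ⟨fun _ _ h => delAdj_symm h⟩; Std.Symm.symm (r := Relation.ReflTransGen (delAdj N)) _ _ hrb)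
    exact hAB (compBlock_eq_of_common (compBlock_closed ha hab) hb)
  -- every leaf below u lies in the block of α, and similarly for u'
  have hmemA : ∀ z, Above N.Arc u (N.leaf z) → z ∈ compBlockOf N α := by
    intro z hz
    exact compBlock_closed ha (Relation.ReflTransGen.trans hra (above_del hN hu0 hz))
  have hmemB : ∀ z, Above N.Arc u' (N.leaf z) → z ∈ compBlockOf N β := by
    intro z hz
    exact compBlock_closed hb (Relation.ReflTransGen.trans hrb (above_del hN hu'0 hz))
  have hnb : ∀ z, Above N.Arc u (N.leaf z) → ¬ Above N.Arc u' (N.leaf z) := by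
    intro z h1 h2
    exact no_leaf_below_both hN hArb harc harc' huu' h1 h2
  obtain ⟨x, hxbel⟩ := exists_leaf_below hN u
  obtain ⟨y, hybel⟩ := exists_leaf_below hN u'
  have hroot : IsRoot N.Arc v := isRoot_of_inDeg_zero hN h0
  by_cases htwo : ∃ z, Above N.Arc u (N.leaf z) ∧ z ≠ x
  · -- two distinct leaves below u: a triplet with cherry in block α
    obtain ⟨z, hzbel, hzx⟩ := htwo
    have hzy : z ≠ y := by rintro rfl; exact hnb z hzbel hybel
    have hxy' : x ≠ y := by rintro rfl; exact hnb x hxbel hybel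
    refine Or.inr ⟨z, x, y, ⟨hzx, hzy, hxy', v, u, hroot,
      Relation.ReflTransGen.single harc, hzbel, hxbel,
      Relation.ReflTransGen.head harc' hybel, fun h => hnb y h hybel⟩,
      Or.inl ⟨hmemA z hzbel, hmemA x hxbel, hmemB y hybel⟩⟩
  · push_neg at htwo
    have huniq : ∀ z, Above N.Arc u (N.leaf z) → z = x := htwo
    by_cases htwo' : ∃ z, Above N.Arc u' (N.leaf z) ∧ z ≠ y
    · -- two distinct leaves below u': a triplet with cherry in block β
      obtain ⟨z, hzbel, hzy⟩ := htwo'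
      have hzx : z ≠ x := by rintro rfl; exact hnb z hxbel hzbel
      have hyx : y ≠ x := by rintro rfl; exact hnb y hxbel hybel
      refine Or.inr ⟨z, y, x, ⟨hzy, hzx, hyx, v, u', hroot,
        Relation.ReflTransGen.single harc', hzbel, hybel,
        Relation.ReflTransGen.head harc hxbel, fun h => hnb x hxbel h⟩,
        Or.inr ⟨hmemB z hzbel, hmemB y hybel, hmemA x hxbel⟩⟩
    · push_neg at htwo'
      have huniq' : ∀ z, Above N.Arc u' (N.leaf z) → z = y := htwo'
      exact Or.inl ⟨x, y,
        duet_of_singles hN hArb hSF h0 harc harc' huu' hxbel huniq hybel huniq',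
        Or.inl ⟨hmemA x hxbel, hmemB y hybel⟩⟩

end Assemble
/-- For a stack-free arboreal network `N` on `X`
(`|X| ≥ 3`), the graph `G'` built from the cherry-partition, the duets and the
triplets is isomorphic to the component graph `G(N)`. -/
theorem scaffold_iso_component_graph
    {X V : Type} [Finite X] (hX : 3 ≤ Nat.card X)
    (N : PreNetwork X V) (hN : IsNetwork N) (hArb : IsArboreal N)
    (hSF : StackFree N) :
    Nonempty (scaffoldGraph N ≃g compGraph N) := by
  classical
  have hfin : Finite V := hN.1
  have hEq : cblocks N = compBlocks N := cblocks_eq hN hArb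
  refine ⟨⟨Equiv.setCongr hEq, ?_⟩⟩
  rintro ⟨C, hC⟩ ⟨C', hC'⟩
  obtain ⟨α, hα⟩ : ∃ a, C = compBlockOf N a := show C ∈ compBlocks N from hEq ▸ hC
  obtain ⟨β, hβ⟩ : ∃ a, C' = compBlockOf N a := show C' ∈ compBlocks N from hEq ▸ hC'
  subst hα hβ
  constructor
  · -- compGraph adjacency → scaffold adjacency
    rintro ⟨hne, v, u, u', hv2, hu, hu', hrA, hrB⟩
    have hCC' : compBlockOf N α ≠ compBlockOf N β := by
      intro h
      exact hne (Subtype.ext h)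
    refine ⟨fun h => hCC' (congrArg Subtype.val h), ?_⟩
    exact comp_adj_to_scaffold hN hArb hSF hCC' hv2 hu hu' hrA hrB
  · -- scaffold adjacency → compGraph adjacency
    rintro ⟨hne, hcase⟩
    have hCC' : compBlockOf N α ≠ compBlockOf N β := by
      intro h
      exact hne (Subtype.ext h)
    have hne' : (Equiv.setCongr hEq ⟨compBlockOf N α, hC⟩ : compBlocks N) ≠
        Equiv.setCongr hEq ⟨compBlockOf N β, hC'⟩ := by
      intro h
      exact hCC' (congrArg Subtype.val h)
    refine ⟨hne', ?_⟩
    rcases hcase with ⟨x, y, hd, hor⟩ | ⟨a, b, c, ht, hor⟩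
    · obtain ⟨v, u, u', hv2, hadj, hadj', hu2, hu'2, hRTx, hRTy⟩ := split_duet hN hd
      rcases hor with ⟨hxC, hyC'⟩ | ⟨hxC', hyC⟩
      · exact ⟨v, u, u', hv2, hadj, hadj', ⟨hu2, x, hxC, hRTx⟩, ⟨hu'2, y, hyC', hRTy⟩⟩
      · exact ⟨v, u', u, hv2, hadj', hadj, ⟨hu'2, y, hyC, hRTy⟩, ⟨hu2, x, hxC', hRTx⟩⟩
    · rcases hor with ⟨haC, hbC, hcC'⟩ | ⟨haC', hbC', hcC⟩
      · obtain ⟨v, u, u', hv2, hadj, hadj', hr1, hr2⟩ :=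
          triplet_to_comp hN hArb haC hcC' hCC' ht
        exact ⟨v, u, u', hv2, hadj, hadj', hr1, hr2⟩
      · obtain ⟨v, u, u', hv2, hadj, hadj', hr1, hr2⟩ :=
          triplet_to_comp hN hArb haC' hcC (Ne.symm hCC') ht
        exact ⟨v, u', u, hv2, hadj', hadj, hr2, hr1⟩

end ArbNet
end

section
/- There exist a set X with |X| = 4 and two arboreal networks N, N' on X such that N contains a stacked hybrid (is not stack-free), N' is stack-free, N is not isomorphic to N', and R(N) ∪ D(N) = R(N') ∪ D(N'). Consequently, arboreal networks that are not stack-free are not, in general, encoded by their induced triplet and duet systems within the class of arboreal networks on X. -/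
/-!
Common definitions for formalizing arboreal networks.

A (multi-rooted) network is modelled as a `PreNetwork`: a directed graph (arc
relation) on a vertex type `V` together with an embedding of the label set `X`
onto the leaves.  `IsNetwork` collects the m-network axioms.  Since the
underlying graph `U(N)` of an m-network is connected and the degree-1 vertices
of `U(N)` are exactly the leaves, the suppressed graph `U(N)⁻` is an unrooted
phylogenetic tree on `X` if and only if `U(N)` is acyclic; we use this as the
definition of `IsArboreal`.
-/

namespace ArbNet

variable {X V W : Type}

/-! ### Auxiliary general lemmas -/

section Helpers
variable {V : Type} [Fintype V] [DecidableEq V]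

omit [DecidableEq V] in
lemma inDeg_eq_card (A : V → V → Prop) [DecidableRel A] (v : V) :
    inDeg A v = (Finset.univ.filter (fun u => A u v)).card := by
  rw [inDeg, ← Set.ncard_coe_finset]; congr 1; ext u; simp

omit [DecidableEq V] in
lemma outDeg_eq_card (A : V → V → Prop) [DecidableRel A] (v : V) :
    outDeg A v = (Finset.univ.filter (fun u => A v u)).card := by
  rw [outDeg, ← Set.ncard_coe_finset]; congr 1; ext u; simp

instance underlyingDec (A : V → V → Prop) [DecidableRel A] : DecidableRel (underlying A).Adj :=
  fun a b => decidable_of_iff (a ≠ b ∧ (A a b ∨ A b a)) Iff.rfl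

lemma udeg_eq_card {X : Type} (N : PreNetwork X V) [DecidableRel N.Arc] (v : V) :
    udeg N v = (Finset.univ.filter (fun u => (underlying N.Arc).Adj v u)).card := by
  rw [udeg, ← Set.ncard_coe_finset]; congr 1; ext u; simp [SimpleGraph.neighborSet]

lemma no_transGen_of_lt {n : ℕ} (A : Fin n → Fin n → Prop) (h : ∀ u v, A u v → u.val < v.val) :
    ∀ v, ¬ Relation.TransGen A v v := by
  have key : ∀ a b, Relation.TransGen A a b → a.val < b.val := by
    intro a b hab
    induction hab with
    | single h1 => exact h _ _ h1
    | tail _ h2 ih => exact ih.trans (h _ _ h2)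
  exact fun v hv => lt_irrefl _ (key v v hv)

lemma above_iff_mem {n : ℕ} {A : Fin n → Fin n → Prop} (below : Fin n → Finset (Fin n))
    (hrefl : ∀ u, u ∈ below u)
    (hfwd : ∀ u a b, a ∈ below u → A a b → b ∈ below u)
    (hlt : ∀ u v, A u v → u.val < v.val)
    (hback : ∀ u v, v ∈ below u → v = u ∨ ∃ w ∈ below u, A w v) :
    ∀ u v, Above A u v ↔ v ∈ below u := by
  have back : ∀ (k : ℕ) (v : Fin n), v.val = k → ∀ u, v ∈ below u → Above A u v := by
    intro k
    induction k using Nat.strong_induction_on with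
    | _ k ih =>
      intro v hv u hm
      rcases hback u v hm with rfl | ⟨w, hw, haw⟩
      · exact Relation.ReflTransGen.refl
      · exact (ih w.val (hv ▸ hlt w v haw) w rfl u hw).tail haw
  intro u v
  constructor
  · intro h
    induction h with
    | refl => exact hrefl u
    | tail _ hbc ih => exact hfwd u _ _ ih hbc
  · exact back v.val v rfl u

omit [Fintype V] [DecidableEq V] in
lemma reach_closed {G : SimpleGraph V} {S : Set V} (hS : ∀ a b, G.Adj a b → a ∈ S → b ∈ S)
    {u v : V} (h : G.Reachable u v) (hu : u ∈ S) : v ∈ S := by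
  obtain ⟨w⟩ := h
  induction w with
  | nil => exact hu
  | cons h p ih => exact ih (hS _ _ h hu)

lemma isBridge_of_sep {G : SimpleGraph V} {v w : V} (h : G.Adj v w) (S : Set V)
    (hv : v ∈ S) (hw : w ∉ S)
    (hcl : ∀ a b, G.Adj a b → ¬(s(a,b) = s(v,w)) → a ∈ S → b ∈ S) : G.IsBridge s(v,w) := by
  rw [SimpleGraph.isBridge_iff]
  refine fun hr => hw ?_
  refine reach_closed (fun a b hab ha => ?_) hr hv
  rw [SimpleGraph.deleteEdges_adj] at hab
  exact hcl a b hab.1 (fun he => hab.2 he) ha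

lemma isAcyclic_of_comp {n : ℕ} (A : Fin n → Fin n → Prop) [DecidableRel A]
    (comp : Fin n → Fin n → Finset (Fin n))
    (hcl : ∀ v w, A v w → v ∈ comp v w ∧ w ∉ comp v w ∧
      ∀ a b, (underlying A).Adj a b → s(a,b) ≠ s(v,w) → a ∈ comp v w → b ∈ comp v w) :
    (underlying A).IsAcyclic := by
  rw [SimpleGraph.isAcyclic_iff_forall_adj_isBridge]
  rintro v w ⟨hne, h | h⟩
  · obtain ⟨h1, h2, h3⟩ := hcl v w h
    exact isBridge_of_sep ⟨hne, Or.inl h⟩ (comp v w) h1 h2 h3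
  · obtain ⟨h1, h2, h3⟩ := hcl w v h
    rw [Sym2.eq_swap]
    exact isBridge_of_sep ⟨hne.symm, Or.inl h⟩ (comp w v) h1 h2 h3

end Helpers

section Symm
variable {V : Type}

lemma tripletRel_swap {X : Type} {N : PreNetwork X V} {x y z : X}
    (h : TripletRel N x y z) : TripletRel N y x z := by
  obtain ⟨h1, h2, h3, r, v, g1, g2, g3, g4, g5, g6⟩ := h
  exact ⟨h1.symm, h3, h2, r, v, g1, g2, g4, g3, g5, g6⟩

lemma duetRel_symm {X : Type} {N : PreNetwork X V} {x y : X}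
    (h : DuetRel N x y) : DuetRel N y x := by
  obtain ⟨hne, hT, w, hp, hc⟩ := h
  refine ⟨hne.symm, fun z => ⟨fun h' => (hT z).1 (tripletRel_swap h'),
    (hT z).2.2, (hT z).2.1⟩, w.reverse, hp.reverse, ?_⟩
  rw [SimpleGraph.Walk.support_reverse, List.countP_eq_length_filter,
    List.filter_reverse, List.length_reverse, ← List.countP_eq_length_filter]
  exact hc

end Symm

/-! ### The two networks -/

def arcsN : List (Fin 9 × Fin 9) := [(0,3),(1,3),(0,6),(1,7),(3,4),(2,4),(2,8),(4,5)]
def ArcN (u v : Fin 9) : Prop := (u,v) ∈ arcsN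
instance : DecidableRel ArcN := fun u v => inferInstanceAs (Decidable (_ ∈ _))
def leafN : Fin 4 → Fin 9 := fun x => ⟨x.val + 5, by omega⟩
def NN : PreNetwork (Fin 4) (Fin 9) := ⟨ArcN, leafN⟩
instance : DecidableRel NN.Arc := fun u v => inferInstanceAs (Decidable ((u,v) ∈ arcsN))

def arcsM : List (Fin 8 × Fin 8) := [(0,3),(1,3),(2,3),(0,5),(1,6),(2,7),(3,4)]
def ArcM (u v : Fin 8) : Prop := (u,v) ∈ arcsM
instance : DecidableRel ArcM := fun u v => inferInstanceAs (Decidable (_ ∈ _))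
def leafM : Fin 4 → Fin 8 := fun x => ⟨x.val + 4, by omega⟩
def MM : PreNetwork (Fin 4) (Fin 8) := ⟨ArcM, leafM⟩
instance : DecidableRel MM.Arc := fun u v => inferInstanceAs (Decidable ((u,v) ∈ arcsM))

def belowN : Fin 9 → Finset (Fin 9) := fun v =>
  match v with
  | 0 => {0,3,4,5,6} | 1 => {1,3,4,5,7} | 2 => {2,4,5,8}
  | 3 => {3,4,5} | 4 => {4,5} | 5 => {5} | 6 => {6} | 7 => {7} | 8 => {8}

def belowM : Fin 8 → Finset (Fin 8) := fun v =>
  match v with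
  | 0 => {0,3,4,5} | 1 => {1,3,4,6} | 2 => {2,3,4,7}
  | 3 => {3,4} | 4 => {4} | 5 => {5} | 6 => {6} | 7 => {7}

lemma aboveN : ∀ u v, Above ArcN u v ↔ v ∈ belowN u :=
  above_iff_mem belowN (by decide) (by decide) (by decide) (by decide)

lemma aboveM : ∀ u v, Above ArcM u v ↔ v ∈ belowM u :=
  above_iff_mem belowM (by decide) (by decide) (by decide) (by decide)

def compN : Fin 9 → Fin 9 → Finset (Fin 9) := fun v w =>
  match v, w with
  | 0, 3 => {0,6} | 1, 3 => {1,7} | 0, 6 => {0,1,2,3,4,5,7,8}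
  | 1, 7 => {0,1,2,3,4,5,6,8} | 3, 4 => {0,1,3,6,7} | 2, 4 => {2,8}
  | 2, 8 => {0,1,2,3,4,5,6,7} | 4, 5 => {0,1,2,3,4,6,7,8} | _, _ => ∅

def compM : Fin 8 → Fin 8 → Finset (Fin 8) := fun v w =>
  match v, w with
  | 0, 3 => {0,5} | 1, 3 => {1,6} | 2, 3 => {2,7}
  | 0, 5 => {0,1,2,3,4,6,7} | 1, 6 => {0,1,2,3,4,5,7}
  | 2, 7 => {0,1,2,3,4,5,6} | 3, 4 => {0,1,2,3,5,6,7} | _, _ => ∅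

lemma acyclicN : (underlying ArcN).IsAcyclic :=
  isAcyclic_of_comp ArcN compN (by decide)

lemma acyclicM : (underlying ArcM).IsAcyclic :=
  isAcyclic_of_comp ArcM compM (by decide)

/-! ### No triplets -/

lemma noTripN : ∀ x y z, ¬ TripletRel NN x y z := by
  have key : ∀ (r v : Fin 9) (x y z : Fin 4), x ≠ y →
      ((Finset.univ.filter (fun u => ArcN u r)).card = 0 ∧
        2 ≤ (Finset.univ.filter (fun u => ArcN r u)).card) →
      v ∈ belowN r → leafN x ∈ belowN v → leafN y ∈ belowN v →
      leafN z ∈ belowN r → leafN z ∈ belowN v := by decide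
  rintro x y z ⟨hxy, -, -, r, v, hr, h1, h2, h3, h4, h5⟩
  rw [IsRoot, inDeg_eq_card, outDeg_eq_card] at hr
  simp only [show NN.Arc = ArcN from rfl, show NN.leaf = leafN from rfl, aboveN]
    at h1 h2 h3 h4 h5
  exact h5 (key r v x y z hxy hr h1 h2 h3 h4)

lemma noTripM : ∀ x y z, ¬ TripletRel MM x y z := by
  have key : ∀ (r v : Fin 8) (x y z : Fin 4), x ≠ y →
      ((Finset.univ.filter (fun u => ArcM u r)).card = 0 ∧
        2 ≤ (Finset.univ.filter (fun u => ArcM r u)).card) →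
      v ∈ belowM r → leafM x ∈ belowM v → leafM y ∈ belowM v →
      leafM z ∈ belowM r → leafM z ∈ belowM v := by decide
  rintro x y z ⟨hxy, -, -, r, v, hr, h1, h2, h3, h4, h5⟩
  rw [IsRoot, inDeg_eq_card, outDeg_eq_card] at hr
  simp only [show MM.Arc = ArcM from rfl, show MM.leaf = leafM from rfl, aboveM]
    at h1 h2 h3 h4 h5
  exact h5 (key r v x y z hxy hr h1 h2 h3 h4)

lemma tripSysN : tripletSys NN = ∅ := by
  ext t
  simp only [tripletSys, Set.mem_setOf_eq, Set.mem_empty_iff_false, iff_false, not_exists]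
  rintro x y z ⟨h, -⟩
  exact noTripN x y z h

lemma tripSysM : tripletSys MM = ∅ := by
  ext t
  simp only [tripletSys, Set.mem_setOf_eq, Set.mem_empty_iff_false, iff_false, not_exists]
  rintro x y z ⟨h, -⟩
  exact noTripM x y z h

/-! ### Duets -/

lemma hudN : (fun v : Fin 9 => decide (udeg NN v = 2)) = fun v => decide (v.val ≤ 2) := by
  have h : ∀ v : Fin 9, udeg NN v = 2 ↔ v.val ≤ 2 := by
    simp only [udeg_eq_card]; decide
  funext v
  exact decide_eq_decide.mpr (h v)

lemma hudM : (fun v : Fin 8 => decide (udeg MM v = 2)) = fun v => decide (v.val ≤ 2) := by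
  have h : ∀ v : Fin 8, udeg MM v = 2 ↔ v.val ≤ 2 := by
    simp only [udeg_eq_card]; decide
  funext v
  exact decide_eq_decide.mpr (h v)

open SimpleGraph.Walk in
def wN56 : (underlying ArcN).Walk 5 6 :=
  cons (v := 4) (by decide) (cons (v := 3) (by decide) (cons (v := 0) (by decide)
    (cons (v := 6) (by decide) nil)))
open SimpleGraph.Walk in
def wN57 : (underlying ArcN).Walk 5 7 :=
  cons (v := 4) (by decide) (cons (v := 3) (by decide) (cons (v := 1) (by decide)
    (cons (v := 7) (by decide) nil)))
open SimpleGraph.Walk in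
def wN58 : (underlying ArcN).Walk 5 8 :=
  cons (v := 4) (by decide) (cons (v := 2) (by decide) (cons (v := 8) (by decide) nil))
open SimpleGraph.Walk in
def wN67 : (underlying ArcN).Walk 6 7 :=
  cons (v := 0) (by decide) (cons (v := 3) (by decide) (cons (v := 1) (by decide)
    (cons (v := 7) (by decide) nil)))
open SimpleGraph.Walk in
def wN68 : (underlying ArcN).Walk 6 8 :=
  cons (v := 0) (by decide) (cons (v := 3) (by decide) (cons (v := 4) (by decide)
    (cons (v := 2) (by decide) (cons (v := 8) (by decide) nil))))
open SimpleGraph.Walk in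
def wN78 : (underlying ArcN).Walk 7 8 :=
  cons (v := 1) (by decide) (cons (v := 3) (by decide) (cons (v := 4) (by decide)
    (cons (v := 2) (by decide) (cons (v := 8) (by decide) nil))))

open SimpleGraph.Walk in
def wM45 : (underlying ArcM).Walk 4 5 :=
  cons (v := 3) (by decide) (cons (v := 0) (by decide) (cons (v := 5) (by decide) nil))
open SimpleGraph.Walk in
def wM46 : (underlying ArcM).Walk 4 6 :=
  cons (v := 3) (by decide) (cons (v := 1) (by decide) (cons (v := 6) (by decide) nil))
open SimpleGraph.Walk in
def wM47 : (underlying ArcM).Walk 4 7 :=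
  cons (v := 3) (by decide) (cons (v := 2) (by decide) (cons (v := 7) (by decide) nil))
open SimpleGraph.Walk in
def wM56 : (underlying ArcM).Walk 5 6 :=
  cons (v := 0) (by decide) (cons (v := 3) (by decide) (cons (v := 1) (by decide)
    (cons (v := 6) (by decide) nil)))
open SimpleGraph.Walk in
def wM57 : (underlying ArcM).Walk 5 7 :=
  cons (v := 0) (by decide) (cons (v := 3) (by decide) (cons (v := 2) (by decide)
    (cons (v := 7) (by decide) nil)))
open SimpleGraph.Walk in
def wM67 : (underlying ArcM).Walk 6 7 :=
  cons (v := 1) (by decide) (cons (v := 3) (by decide) (cons (v := 2) (by decide)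
    (cons (v := 7) (by decide) nil)))

lemma duetN_pos {x y : Fin 4} (w : (underlying ArcN).Walk (leafN x) (leafN y))
    (hne : x ≠ y) (hp : w.IsPath)
    (hc : (w.support.countP fun v => decide (v.val ≤ 2)) = 1) : DuetRel NN x y := by
  refine ⟨hne, fun z => ⟨noTripN _ _ _, noTripN _ _ _, noTripN _ _ _⟩, w, hp, ?_⟩
  rw [hudN]
  exact hc

lemma duetM_pos {x y : Fin 4} (w : (underlying ArcM).Walk (leafM x) (leafM y))
    (hne : x ≠ y) (hp : w.IsPath)
    (hc : (w.support.countP fun v => decide (v.val ≤ 2)) = 1) : DuetRel MM x y := by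
  refine ⟨hne, fun z => ⟨noTripM _ _ _, noTripM _ _ _, noTripM _ _ _⟩, w, hp, ?_⟩
  rw [hudM]
  exact hc

lemma duetN_neg {x y : Fin 4} (w0 : (underlying ArcN).Walk (leafN x) (leafN y))
    (hp0 : w0.IsPath)
    (hc0 : (w0.support.countP fun v => decide (v.val ≤ 2)) ≠ 1) : ¬ DuetRel NN x y := by
  rintro ⟨-, -, w, hp, hc⟩
  have hEq : w = w0 :=
    congrArg Subtype.val (acyclicN.path_unique ⟨w, hp⟩ ⟨w0, hp0⟩)
  rw [hEq, hudN] at hc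
  exact hc0 hc

lemma duetM_neg {x y : Fin 4} (w0 : (underlying ArcM).Walk (leafM x) (leafM y))
    (hp0 : w0.IsPath)
    (hc0 : (w0.support.countP fun v => decide (v.val ≤ 2)) ≠ 1) : ¬ DuetRel MM x y := by
  rintro ⟨-, -, w, hp, hc⟩
  have hEq : w = w0 :=
    congrArg Subtype.val (acyclicM.path_unique ⟨w, hp⟩ ⟨w0, hp0⟩)
  rw [hEq, hudM] at hc
  exact hc0 hc

lemma duetN_iff (x y : Fin 4) : DuetRel NN x y ↔ (x ≠ y ∧ (x = 0 ∨ y = 0)) := by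
  have p01 : DuetRel NN 0 1 := duetN_pos wN56 (by decide)
    ((SimpleGraph.Walk.isPath_def _).mpr (by decide)) (by decide)
  have p02 : DuetRel NN 0 2 := duetN_pos wN57 (by decide)
    ((SimpleGraph.Walk.isPath_def _).mpr (by decide)) (by decide)
  have p03 : DuetRel NN 0 3 := duetN_pos wN58 (by decide)
    ((SimpleGraph.Walk.isPath_def _).mpr (by decide)) (by decide)
  have n12 : ¬ DuetRel NN 1 2 := duetN_neg wN67
    ((SimpleGraph.Walk.isPath_def _).mpr (by decide)) (by decide)
  have n13 : ¬ DuetRel NN 1 3 := duetN_neg wN68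
    ((SimpleGraph.Walk.isPath_def _).mpr (by decide)) (by decide)
  have n23 : ¬ DuetRel NN 2 3 := duetN_neg wN78
    ((SimpleGraph.Walk.isPath_def _).mpr (by decide)) (by decide)
  have diag : ∀ a : Fin 4, ¬ DuetRel NN a a := fun a h => h.1 rfl
  fin_cases x <;> fin_cases y
  · exact iff_of_false (diag 0) (by decide)
  · exact iff_of_true p01 (by decide)
  · exact iff_of_true p02 (by decide)
  · exact iff_of_true p03 (by decide)
  · exact iff_of_true (duetRel_symm p01) (by decide)
  · exact iff_of_false (diag 1) (by decide)
  · exact iff_of_false n12 (by decide)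
  · exact iff_of_false n13 (by decide)
  · exact iff_of_true (duetRel_symm p02) (by decide)
  · exact iff_of_false (fun h => n12 (duetRel_symm h)) (by decide)
  · exact iff_of_false (diag 2) (by decide)
  · exact iff_of_false n23 (by decide)
  · exact iff_of_true (duetRel_symm p03) (by decide)
  · exact iff_of_false (fun h => n13 (duetRel_symm h)) (by decide)
  · exact iff_of_false (fun h => n23 (duetRel_symm h)) (by decide)
  · exact iff_of_false (diag 3) (by decide)

lemma duetM_iff (x y : Fin 4) : DuetRel MM x y ↔ (x ≠ y ∧ (x = 0 ∨ y = 0)) := by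
  have p01 : DuetRel MM 0 1 := duetM_pos wM45 (by decide)
    ((SimpleGraph.Walk.isPath_def _).mpr (by decide)) (by decide)
  have p02 : DuetRel MM 0 2 := duetM_pos wM46 (by decide)
    ((SimpleGraph.Walk.isPath_def _).mpr (by decide)) (by decide)
  have p03 : DuetRel MM 0 3 := duetM_pos wM47 (by decide)
    ((SimpleGraph.Walk.isPath_def _).mpr (by decide)) (by decide)
  have n12 : ¬ DuetRel MM 1 2 := duetM_neg wM56
    ((SimpleGraph.Walk.isPath_def _).mpr (by decide)) (by decide)
  have n13 : ¬ DuetRel MM 1 3 := duetM_neg wM57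
    ((SimpleGraph.Walk.isPath_def _).mpr (by decide)) (by decide)
  have n23 : ¬ DuetRel MM 2 3 := duetM_neg wM67
    ((SimpleGraph.Walk.isPath_def _).mpr (by decide)) (by decide)
  have diag : ∀ a : Fin 4, ¬ DuetRel MM a a := fun a h => h.1 rfl
  fin_cases x <;> fin_cases y
  · exact iff_of_false (diag 0) (by decide)
  · exact iff_of_true p01 (by decide)
  · exact iff_of_true p02 (by decide)
  · exact iff_of_true p03 (by decide)
  · exact iff_of_true (duetRel_symm p01) (by decide)
  · exact iff_of_false (diag 1) (by decide)
  · exact iff_of_false n12 (by decide)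
  · exact iff_of_false n13 (by decide)
  · exact iff_of_true (duetRel_symm p02) (by decide)
  · exact iff_of_false (fun h => n12 (duetRel_symm h)) (by decide)
  · exact iff_of_false (diag 2) (by decide)
  · exact iff_of_false n23 (by decide)
  · exact iff_of_true (duetRel_symm p03) (by decide)
  · exact iff_of_false (fun h => n13 (duetRel_symm h)) (by decide)
  · exact iff_of_false (fun h => n23 (duetRel_symm h)) (by decide)
  · exact iff_of_false (diag 3) (by decide)

lemma dtSysEq : dtSys NN = dtSys MM := by
  have hd : duetSys NN = duetSys MM := by
    unfold duetSys
    ext d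
    simp only [Set.mem_setOf_eq, duetN_iff, duetM_iff]
  unfold dtSys
  rw [hd, tripSysN, tripSysM]

/-! ### Network axioms -/

lemma isNetworkN : IsNetwork NN := by
  refine ⟨inferInstanceAs (Finite (Fin 9)), no_transGen_of_lt ArcN (by decide), ?_, ?_, ?_, ?_⟩
  · rw [SimpleGraph.connected_iff]
    exact ⟨by decide, ⟨0⟩⟩
  · decide
  · simp only [IsLeafVtx, inDeg_eq_card, outDeg_eq_card, Set.mem_range]
    decide
  · simp only [IsLeafVtx, IsHybrid, IsTreeVtx, inDeg_eq_card, outDeg_eq_card]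
    decide

lemma isNetworkM : IsNetwork MM := by
  refine ⟨inferInstanceAs (Finite (Fin 8)), no_transGen_of_lt ArcM (by decide), ?_, ?_, ?_, ?_⟩
  · rw [SimpleGraph.connected_iff]
    exact ⟨by decide, ⟨0⟩⟩
  · decide
  · simp only [IsLeafVtx, inDeg_eq_card, outDeg_eq_card, Set.mem_range]
    decide
  · simp only [IsLeafVtx, IsHybrid, IsTreeVtx, inDeg_eq_card, outDeg_eq_card]
    decide

lemma notStackFreeN : ¬ StackFree NN := by
  intro h
  have hyb : IsHybrid NN.Arc 3 ∧ IsHybrid NN.Arc 4 := by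
    simp only [IsHybrid, inDeg_eq_card, outDeg_eq_card]
    decide
  exact h 3 4 (by decide) hyb

lemma stackFreeM : StackFree MM := by
  unfold StackFree
  simp only [IsHybrid, inDeg_eq_card, outDeg_eq_card]
  decide

/-- There are a 4-element set `X`, an arboreal network `N`
on `X` containing a stacked hybrid and a stack-free arboreal network `N'` on
`X` with `N ≄ N'` and `ℛ(N) ∪ 𝒟(N) = ℛ(N') ∪ 𝒟(N')`: arboreal networks that
are not stack-free are not encoded by their triplet and duet systems. -/
theorem stacked_not_encoded :
    ∃ (X : Type), Nat.card X = 4 ∧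
      ∃ (V W : Type) (N : PreNetwork X V) (N' : PreNetwork X W),
        IsNetwork N ∧ IsArboreal N ∧ ¬ StackFree N ∧
        InA N' ∧ ¬ Isomorphic N N' ∧
        dtSys N = dtSys N' := by
  refine ⟨Fin 4, by simp, Fin 9, Fin 8, NN, MM, isNetworkN, acyclicN, notStackFreeN,
    ⟨isNetworkM, acyclicM, stackFreeM⟩, ?_, dtSysEq⟩
  rintro ⟨e, -, -⟩
  have := Fintype.card_congr e
  simp [Fintype.card_fin] at this

end ArbNet
end
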